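/- Let (A, B) be an exact 3-separation of a matroid M″ extended with a guts line L (so ⊓(A, L) = ⊓(B, L) = 2). If A′ ⊆ A and B′ ⊆ B satisfy ⊓(A′, B′) = 2, then ⊓(A′ ∪ B′, L) = 2. -/

import Mathlib

open Set

variable {α : Type*}

/-- The rank of a set in a matroid: the supremum of cardinalities of independent subsets. -/
noncomputable def mRk (M : Matroid α) (X : Set α) : ℕ :=
  sSup (Set.ncard '' {I | M.Indep I ∧ I ⊆ X})

/-- Local connectivity `⊓(S, T) = r(S) + r(T) − r(S ∪ T)`. -/
noncomputable def mConn (M : Matroid α) (S T : Set α) : ℤ :=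
  (mRk M S : ℤ) + (mRk M T : ℤ) - (mRk M (S ∪ T) : ℤ)

/-- A circuit: a minimal dependent set. -/
def mCircuit (M : Matroid α) (C : Set α) : Prop :=
  M.Dep C ∧ ∀ D, D ⊂ C → ¬ M.Dep D

/-- `M'` is a single-element extension of `M` by the element `p`:
`p` is a new element, the ground set grows by `p`, and deleting `p` recovers `M`. -/
def ExtBy (M' M : Matroid α) (p : α) : Prop :=
  p ∉ M.E ∧ M'.E = insert p M.E ∧ M'.restrict M.E = M

/-- `M'` is an extension of `M` by the two new elements `x` and `y`. -/
def ExtBy2 (M' M : Matroid α) (x y : α) : Prop :=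
  x ∉ M.E ∧ y ∉ M.E ∧ x ≠ y ∧ M'.E = insert x (insert y M.E) ∧ M'.restrict M.E = M

/-- `(A, B)` is an exact 3-separation of `M`: a partition of the ground set with
`r(A) + r(B) − r(M) = 2`. -/
def Exact3Sep (M : Matroid α) (A B : Set α) : Prop :=
  Disjoint A B ∧ A ∪ B = M.E ∧
    (mRk M A : ℤ) + (mRk M B : ℤ) - (mRk M M.E : ℤ) = 2

/-- An `A`-strand relative to the separation `(A, B)`: a minimal subset `S` of `A` with
`⊓(S, B) = 1`. -/
def Strand (M : Matroid α) (A B S : Set α) : Prop :=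
  S ⊆ A ∧ mConn M S B = 1 ∧ ∀ S', S' ⊂ S → mConn M S' B ≠ 1

/-! Since `⊓(B, L) = r(L)`, the set `L` lies in the closure of `B`. By submodularity the gain
`⊓(A, Y) - ⊓(A', Y)` is monotone in `Y`, hence
`⊓(A, L) - ⊓(A', L) ≤ ⊓(A, B ∪ L) - ⊓(A', B ∪ L) = ⊓(A, B) - ⊓(A', B)`,
which is at most `⊓(A, B) - ⊓(A', B') = 0`. So `⊓(A', L) ≥ ⊓(A, L) = r(L)`: already `A'`
spans `L`, and so does `A' ∪ B'`. -/

section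

open Matroid

variable {M : Matroid α} {X X' Y Y' Z : Set α}

lemma mRk_eq_toNat_eRk (M : Matroid α) (X : Set α) : mRk M X = (M.eRk X).toNat := by
  obtain ⟨I, hI⟩ := M.exists_isBasis' X
  by_cases hX : M.IsRkFinite X
  · have hIfin := hX.finite_of_isBasis' hI
    have hmax : IsGreatest (Set.ncard '' {J | M.Indep J ∧ J ⊆ X}) I.ncard := by
      refine ⟨⟨I, ⟨hI.indep, hI.subset⟩, rfl⟩, ?_⟩
      rintro _ ⟨J, ⟨hJ, hJX⟩, rfl⟩
      have hJfin := hX.finite_of_indep_subset hJ hJX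
      rw [← ENat.natCast_le_natCast, hJfin.cast_ncard_eq, hIfin.cast_ncard_eq, hI.encard_eq_eRk]
      exact hJ.encard_le_eRk_of_subset hJX
    rw [mRk, hmax.csSup_eq, ← hI.encard_eq_eRk, ← hIfin.cast_ncard_eq, ENat.toNat_natCast]
  · have hIinf : I.Infinite := fun h => hX (hI.isRkFinite_of_finite h)
    have hunbdd : ¬ BddAbove (Set.ncard '' {J | M.Indep J ∧ J ⊆ X}) := by
      rintro ⟨m, hm⟩
      obtain ⟨J, hJI, -, hJcard⟩ := hIinf.exists_subset_ncard_eq (m + 1)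
      have : m + 1 ≤ m := hm ⟨J, ⟨hI.indep.subset hJI, hJI.trans hI.subset⟩, hJcard⟩
      omega
    rw [mRk, Nat.sSup_of_not_bddAbove hunbdd, eRk_eq_top_iff.2 hX, ENat.toNat_top]

lemma mRk_eq_zero_of_not_isRkFinite (hX : ¬ M.IsRkFinite X) : mRk M X = 0 := by
  rw [mRk_eq_toNat_eRk, eRk_eq_top_iff.2 hX, ENat.toNat_top]

lemma Matroid.IsRkFinite.cast_mRk (hX : M.IsRkFinite X) : (mRk M X : ℕ∞) = M.eRk X := by
  rw [mRk_eq_toNat_eRk, ENat.natCast_toNat hX.eRk_lt_top.ne]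

lemma Matroid.IsRkFinite.mRk_mono (hY : M.IsRkFinite Y) (hXY : X ⊆ Y) : mRk M X ≤ mRk M Y := by
  rw [← ENat.natCast_le_natCast, hY.cast_mRk, (hY.subset hXY).cast_mRk]
  exact M.eRk_mono hXY

lemma Matroid.IsRkFinite.mRk_submod (h : M.IsRkFinite (X ∪ Y)) :
    mRk M (X ∩ Y) + mRk M (X ∪ Y) ≤ mRk M X + mRk M Y := by
  rw [← ENat.natCast_le_natCast, ENat.natCast_add, ENat.natCast_add, h.cast_mRk,
    (h.subset (inter_subset_left.trans subset_union_left)).cast_mRk,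
    (h.subset subset_union_left).cast_mRk, (h.subset subset_union_right).cast_mRk]
  exact M.eRk_submod X Y

lemma mConn_comm (M : Matroid α) (X Y : Set α) : mConn M X Y = mConn M Y X := by
  rw [mConn, mConn, union_comm]; ring

lemma mConn_empty_left (M : Matroid α) (Y : Set α) : mConn M ∅ Y = 0 := by
  simp [mConn, mRk_eq_toNat_eRk]

lemma mConn_of_subset (h : X ⊆ Y) : mConn M X Y = mRk M X := by
  rw [mConn, union_eq_right.2 h]; ring

lemma mConn_of_not_isRkFinite_left (hX : ¬ M.IsRkFinite X) : mConn M X Y = mRk M Y := by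
  have hXY : ¬ M.IsRkFinite (X ∪ Y) := fun h => hX (h.subset subset_union_left)
  rw [mConn, mRk_eq_zero_of_not_isRkFinite hX, mRk_eq_zero_of_not_isRkFinite hXY]; ring

lemma mConn_of_not_isRkFinite_right (hY : ¬ M.IsRkFinite Y) : mConn M X Y = mRk M X := by
  rw [mConn_comm, mConn_of_not_isRkFinite_left hY]

lemma Matroid.IsRkFinite.mConn_le_mRk_right (h : M.IsRkFinite (X ∪ Y)) :
    mConn M X Y ≤ mRk M Y := by
  have := h.mRk_mono subset_union_left
  rw [mConn]; omega

lemma Matroid.IsRkFinite.mConn_le_mRk_left (h : M.IsRkFinite (X ∪ Y)) :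
    mConn M X Y ≤ mRk M X := by
  rw [mConn_comm]; exact (union_comm X Y ▸ h).mConn_le_mRk_right

lemma Matroid.IsRkFinite.mConn_sub_mConn_le (h : M.IsRkFinite (X ∪ Z)) (hX : X' ⊆ X)
    (hYZ : Y ⊆ Z) : mConn M X Y - mConn M X' Y ≤ mConn M X Z - mConn M X' Z := by
  have hunion : (X ∪ Y) ∪ (X' ∪ Z) = X ∪ Z :=
    (union_subset (union_subset_union_right X hYZ) (union_subset_union_left Z hX)).antisymm
      (union_subset_union subset_union_left subset_union_right)
  have hsub := (hunion ▸ h).mRk_submod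
  have hinter : X' ∪ Y ⊆ (X ∪ Y) ∩ (X' ∪ Z) :=
    subset_inter (union_subset_union_left Y hX) (union_subset_union_right X' hYZ)
  have hmono := (h.subset (inter_subset_left.trans (union_subset_union_right X hYZ))).mRk_mono
    hinter
  rw [hunion] at hsub
  simp only [mConn]
  omega

lemma Matroid.IsRkFinite.mConn_mono_right (h : M.IsRkFinite (X ∪ Z)) (hYZ : Y ⊆ Z) :
    mConn M X Y ≤ mConn M X Z := by
  simpa [mConn_empty_left] using h.mConn_sub_mConn_le (empty_subset X) hYZ

lemma Matroid.IsRkFinite.mConn_mono_left (h : M.IsRkFinite (Z ∪ Y)) (hXZ : X ⊆ Z) :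
    mConn M X Y ≤ mConn M Z Y := by
  rw [mConn_comm, mConn_comm M Z]
  exact (union_comm Z Y ▸ h).mConn_mono_right hXZ

lemma Matroid.IsRkFinite.mConn_le_mConn_of_le_of_subset (h : M.IsRkFinite (X ∪ Z))
    (hX : X' ⊆ X) (hYZ : Y ⊆ Z) (hZ : mConn M X Z ≤ mConn M X' Z) :
    mConn M X Y ≤ mConn M X' Y := by
  linarith [h.mConn_sub_mConn_le hX hYZ]

lemma Matroid.IsRkFinite.mConn_le_mConn_of_mRk_le (h : M.IsRkFinite (X ∪ Y)) (hX : X' ⊆ X)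
    (hr : mRk M X ≤ mRk M X') : mConn M X Y ≤ mConn M X' Y := by
  have h' : M.IsRkFinite (X ∪ (X ∪ Y)) := by rwa [← union_assoc, union_self]
  refine h'.mConn_le_mConn_of_le_of_subset hX subset_union_right ?_
  rw [mConn_of_subset subset_union_left, mConn_of_subset (hX.trans subset_union_left)]
  exact_mod_cast hr

lemma Matroid.IsRkFinite.mConn_union_right_eq_of_mConn_eq_mRk (h : M.IsRkFinite (X ∪ (Y ∪ Z)))
    (hZ : mConn M Y Z = mRk M Z) : mConn M X (Y ∪ Z) = mConn M X Y := by
  have hYZ : mRk M (Y ∪ Z) = mRk M Y := by rw [mConn] at hZ; omega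
  have hU : (X ∪ Y) ∪ (Y ∪ Z) = X ∪ (Y ∪ Z) := by
    rw [union_assoc, ← union_assoc Y, union_self]
  have hsub := (hU ▸ h).mRk_submod
  have hY : mRk M Y ≤ mRk M ((X ∪ Y) ∩ (Y ∪ Z)) :=
    (h.subset (inter_subset_left.trans (union_subset_union_right X subset_union_left))).mRk_mono
      (subset_inter subset_union_right subset_union_left)
  have hmono := h.mRk_mono (union_subset_union_right X (subset_union_left (t := Z)))
  rw [hU] at hsub
  simp only [mConn]
  omega

lemma Matroid.IsRkFinite.mConn_le_mConn_of_mConn_le_of_spanned {L : Set α}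
    (hfin : M.IsRkFinite (X ∪ (Y ∪ L))) (hX : X' ⊆ X) (hY : Y' ⊆ Y)
    (hL : mConn M Y L = mRk M L) (h : mConn M X Y ≤ mConn M X' Y') :
    mConn M X L ≤ mConn M X' L := by
  refine hfin.mConn_le_mConn_of_le_of_subset hX subset_union_right ?_
  rw [hfin.mConn_union_right_eq_of_mConn_eq_mRk hL]
  exact h.trans ((hfin.subset (union_subset_union_left _ hX)).mConn_mono_right
    (hY.trans subset_union_left))

end

theorem conn_two_spans_guts_general (M : Matroid α) (A B : Set α) (L : Set α)
    (hrL : mRk M L = 2)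
    (hconnAL : mConn M A L = 2) (hconnBL : mConn M B L = 2) (hconnAB : mConn M A B = 2)
    (A' B' : Set α) (hA' : A' ⊆ A) (hB' : B' ⊆ B) (h : mConn M A' B' = 2) :
    mConn M (A' ∪ B') L = 2 := by
  have hL : M.IsRkFinite L := by
    by_contra hL
    rw [mRk_eq_zero_of_not_isRkFinite hL] at hrL
    omega
  by_cases hA'B' : M.IsRkFinite (A' ∪ B')
  swap
  · simp [mConn_of_not_isRkFinite_left hA'B', hrL]
  have hle := (hA'B'.union hL).mConn_le_mRk_right
  refine le_antisymm (by omega) ?_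
  suffices 2 ≤ mConn M A' L ∨ 2 ≤ mConn M B' L by
    have := (hA'B'.union hL).mConn_mono_left (X := A') subset_union_left
    have := (hA'B'.union hL).mConn_mono_left (X := B') subset_union_right
    omega
  by_cases hA : M.IsRkFinite A <;> by_cases hB : M.IsRkFinite B
  · have hfin := hA.union (hB.union hL)
    exact .inl (hconnAL ▸ hfin.mConn_le_mConn_of_mConn_le_of_spanned hA' hB'
      (by simp [hconnBL, hrL]) (hconnAB.trans h.symm).le)
  -- If `B` has infinite rank, `mRk` gives `B` and `A ∪ B` the junk value `0`, so `⊓(A, B) = 2`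
  -- says `r(A) = 2`, which forces `r(A') = r(A)`; symmetrically if `A` has infinite rank.
  · have := hA'B'.mConn_le_mRk_left
    rw [mConn_of_not_isRkFinite_right hB] at hconnAB
    exact .inl (hconnAL ▸ (hA.union hL).mConn_le_mConn_of_mRk_le hA' (by omega))
  · have := hA'B'.mConn_le_mRk_right
    rw [mConn_of_not_isRkFinite_left hA] at hconnAB
    exact .inr (hconnBL ▸ (hB.union hL).mConn_le_mConn_of_mRk_le hB' (by omega))
  · rw [mConn_of_not_isRkFinite_left hA, mRk_eq_zero_of_not_isRkFinite hB] at hconnAB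
    omega

/-- If `A' ⊆ A`, `B' ⊆ B` and `⊓(A', B') = 2`, then `⊓(A' ∪ B', L) = 2`. -/
theorem conn_two_spans_guts (M : Matroid α) (A B : Set α) (x : α) (L : Set α)
    (hAB : Disjoint A B) (hxL : x ∈ L)
    (hx : x ∈ M.closure A ∩ M.closure B) (hrL : mRk M L = 2)
    (hconnAL : mConn M A L = 2) (hconnBL : mConn M B L = 2) (hconnAB : mConn M A B = 2)
    (A' B' : Set α) (hA' : A' ⊆ A) (hB' : B' ⊆ B) (h : mConn M A' B' = 2) :
    mConn M (A' ∪ B') L = 2 :=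
  conn_two_spans_guts_general M A B L hrL hconnAL hconnBL hconnAB A' B' hA' hB' h
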